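/- arXiv:1201.4608 — 3 statements merged into one kernel-verified Lean document; each statement's English description precedes it below -/
import Mathlib

section
/- Let H be a self-adjoint operator on a Hilbert space with domain D, and let P be an orthogonal projection with PD ⊆ D such that the commutator [H,P] extends to a bounded operator with ‖[H,P]‖ ≤ d. Then for every s ∈ ℝ, ‖[e^{-iHs}, P]‖ ≤ |s|·d. -/
/-!
For `x, y` in the domain of `T`, the function `r ↦ ⟪U (r - s) y, P (U r x)⟫` runs from
`⟪y, U s (P x)⟫` at `r = 0` to `⟪y, P (U s x)⟫` at `r = s`. Since `U` preserves the domain of `T`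
and commutes with `T`, its derivative is `-i ⟪C (U (r - s) y), U r x⟫`, of modulus at most
`‖C‖ ‖x‖ ‖y‖`. The mean value theorem bounds the matrix elements of `[U s, P]` between vectors of
the dense domain by `|s| ‖C‖ ‖x‖ ‖y‖`, which bounds its norm.
-/

open Complex LinearPMap
open scoped InnerProductSpace

theorem ContinuousLinearMap.opNorm_le_of_dense_inner_le {𝕜 E F : Type*} [RCLike 𝕜]
    [NormedAddCommGroup E] [InnerProductSpace 𝕜 E] [NormedAddCommGroup F] [InnerProductSpace 𝕜 F]
    {A : E →L[𝕜] F} {S : Set E} {S' : Set F} (hS : Dense S) (hS' : Dense S') {M : ℝ}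
    (hM : 0 ≤ M) (h : ∀ x ∈ S, ∀ y ∈ S', ‖⟪A x, y⟫_𝕜‖ ≤ M * (‖x‖ * ‖y‖)) : ‖A‖ ≤ M := by
  have hclosed : IsClosed {p : E × F | ‖⟪A p.1, p.2⟫_𝕜‖ ≤ M * (‖p.1‖ * ‖p.2‖)} :=
    isClosed_le (by fun_prop) (by fun_prop)
  have hall (x : E) (y : F) : ‖⟪A x, y⟫_𝕜‖ ≤ M * (‖x‖ * ‖y‖) :=
    hclosed.closure_subset_iff.mpr (fun p hp => h _ hp.1 _ hp.2) (hS.prod hS' (x, y))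
  refine opNorm_le_of_re_inner_le hM fun x y hx hy => ?_
  calc RCLike.re (⟪A x, y⟫_𝕜) ≤ ‖⟪A x, y⟫_𝕜‖ := RCLike.re_le_norm _
    _ ≤ M := by simpa [hx, hy] using hall x y

section

variable {𝓗 : Type*} [NormedAddCommGroup 𝓗] [InnerProductSpace ℂ 𝓗] {T : 𝓗 →ₗ.[ℂ] 𝓗}

section SelfAdjoint

variable [CompleteSpace 𝓗]

theorem IsSelfAdjoint.isFormalAdjoint_self (hT : IsSelfAdjoint T) : T.IsFormalAdjoint T := by
  have h := adjoint_isFormalAdjoint hT.dense_domain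
  rwa [isSelfAdjoint_def.mp hT] at h

theorem IsSelfAdjoint.exists_apply_eq_of_inner_eq (hT : IsSelfAdjoint T) {y w : 𝓗}
    (h : ∀ x : T.domain, ⟪T x, y⟫_ℂ = ⟪(x : 𝓗), w⟫_ℂ) :
    ∃ hy : y ∈ T.domain, T ⟨y, hy⟩ = w := by
  have hy : y ∈ T†.domain :=
    mem_adjoint_domain_of_exists y ⟨w, fun x => by rw [← inner_conj_symm, ← h x, inner_conj_symm]⟩
  rw [isSelfAdjoint_def.mp hT] at hy
  refine ⟨hy, hT.dense_domain.eq_of_inner_right ℂ fun v hv => ?_⟩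
  exact (hT.isFormalAdjoint_self ⟨v, hv⟩ ⟨y, hy⟩).symm.trans (h ⟨v, hv⟩)

end SelfAdjoint

/-- `U s = e^{-isT}`; only the derivative on the domain of `T` is prescribed. -/
structure IsUnitaryGroupGeneratedBy (T : 𝓗 →ₗ.[ℂ] 𝓗) (U : ℝ → 𝓗 →L[ℂ] 𝓗) : Prop where
  norm_map : ∀ (s : ℝ) (x : 𝓗), ‖U s x‖ = ‖x‖
  map_zero : U 0 = 1
  map_add : ∀ s t : ℝ, U (s + t) = U s ∘L U t
  hasDerivAt : ∀ (x : T.domain) (s : ℝ),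
    HasDerivAt (fun r : ℝ => U r (x : 𝓗)) ((-I) • U s (T x)) s

namespace IsUnitaryGroupGeneratedBy

variable {U : ℝ → 𝓗 →L[ℂ] 𝓗} (hU : IsUnitaryGroupGeneratedBy T U)
include hU

theorem inner_map_map (s : ℝ) (x y : 𝓗) : ⟪U s x, U s y⟫_ℂ = ⟪x, y⟫_ℂ :=
  (LinearMap.norm_map_iff_inner_map_map (U s)).mp (hU.norm_map s) x y

theorem inner_map_neg_left (s : ℝ) (x y : 𝓗) : ⟪U (-s) x, y⟫_ℂ = ⟪x, U s y⟫_ℂ := by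
  rw [← hU.inner_map_map s, ← ContinuousLinearMap.comp_apply, ← hU.map_add, add_neg_cancel,
    hU.map_zero, one_apply_eq_self]

theorem domain_invariant [CompleteSpace 𝓗] (hT : IsSelfAdjoint T) (t : ℝ) (x : T.domain) :
    ∃ h : U t x ∈ T.domain, T ⟨U t x, h⟩ = U t (T x) := by
  refine hT.exists_apply_eq_of_inner_eq fun z => ?_
  -- `r ↦ ⟪U r z, U (r + t) x⟫` is constant; its derivative at `0` gives the claim.
  have hconst :
      (fun r : ℝ => ⟪U r (z : 𝓗), U (r + t) (x : 𝓗)⟫_ℂ) = fun _ => ⟪(z : 𝓗), U t x⟫_ℂ := by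
    funext r
    rw [hU.map_add, ContinuousLinearMap.comp_apply, hU.inner_map_map]
  have hderiv := (hU.hasDerivAt z 0).inner ℂ ((hU.hasDerivAt x (0 + t)).comp_add_const 0 t)
  rw [hconst] at hderiv
  have h0 := (hasDerivAt_const (0 : ℝ) ⟪(z : 𝓗), U t x⟫_ℂ).unique hderiv
  simp only [zero_add, hU.map_zero, one_apply_eq_self, inner_smul_left,
    inner_smul_right, conj_neg_I] at h0
  exact mul_left_cancel₀ I_ne_zero (by linear_combination -h0)

end IsUnitaryGroupGeneratedBy

section Commutator

variable {P C : 𝓗 →L[ℂ] 𝓗} {hPD : ∀ x ∈ T.domain, P x ∈ T.domain}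

theorem LinearPMap.IsFormalAdjoint.neg_inner_commutator_eq (hT : T.IsFormalAdjoint T)
    (hP : (P : 𝓗 →ₗ[ℂ] 𝓗).IsSymmetric) (hC : ∀ x : T.domain, C x = T ⟨P x, hPD x x.2⟩ - P (T x))
    (u v : T.domain) : -⟪C u, v⟫_ℂ = ⟪T u, P v⟫_ℂ - ⟪(u : 𝓗), P (T v)⟫_ℂ := by
  rw [hC, inner_sub_left, hT ⟨P u, hPD u u.2⟩ v]
  have hP' : ∀ a b : 𝓗, ⟪P a, b⟫_ℂ = ⟪a, P b⟫_ℂ := hP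
  rw [hP', hP']
  ring

namespace IsUnitaryGroupGeneratedBy

variable [CompleteSpace 𝓗] {U : ℝ → 𝓗 →L[ℂ] 𝓗} (hU : IsUnitaryGroupGeneratedBy T U)
include hU

theorem hasDerivAt_inner_projection (hT : IsSelfAdjoint T) (hP : (P : 𝓗 →ₗ[ℂ] 𝓗).IsSymmetric)
    (hC : ∀ x : T.domain, C x = T ⟨P x, hPD x x.2⟩ - P (T x)) (x y : T.domain) (s r : ℝ) :
    HasDerivAt (fun t => ⟪U (t - s) y, P (U t x)⟫_ℂ) (I * -⟪C (U (r - s) y), U r x⟫_ℂ) r := by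
  obtain ⟨hy, hTy⟩ := hU.domain_invariant hT (r - s) y
  obtain ⟨hx, hTx⟩ := hU.domain_invariant hT r x
  have hPx := (P.restrictScalars ℝ).hasFDerivAt.comp_hasDerivAt r (hU.hasDerivAt x r)
  refine (((hU.hasDerivAt y (r - s)).comp_sub_const r s).inner ℂ hPx).congr_deriv ?_
  rw [hT.isFormalAdjoint_self.neg_inner_commutator_eq hP hC ⟨_, hy⟩ ⟨_, hx⟩, hTy, hTx]
  simp only [ContinuousLinearMap.coe_restrictScalars', Function.comp_apply, _root_.map_smul,
    inner_smul_left, inner_smul_right, conj_neg_I]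
  ring

theorem norm_inner_commutator_projection_le (hT : IsSelfAdjoint T)
    (hP : (P : 𝓗 →ₗ[ℂ] 𝓗).IsSymmetric) (hC : ∀ x : T.domain, C x = T ⟨P x, hPD x x.2⟩ - P (T x))
    (s : ℝ) (x y : T.domain) :
    ‖⟪(U s ∘L P - P ∘L U s) x, y⟫_ℂ‖ ≤ |s| * ‖C‖ * (‖(x : 𝓗)‖ * ‖(y : 𝓗)‖) := by
  set F : ℝ → ℂ := fun r => ⟪U (r - s) y, P (U r x)⟫_ℂ
  have hderiv_le (r : ℝ) :
      ‖I * -⟪C (U (r - s) y), U r x⟫_ℂ‖ ≤ ‖C‖ * (‖(x : 𝓗)‖ * ‖(y : 𝓗)‖) :=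
    calc ‖I * -⟪C (U (r - s) y), U r x⟫_ℂ‖ = ‖⟪C (U (r - s) y), U r x⟫_ℂ‖ := by simp
      _ ≤ ‖C (U (r - s) y)‖ * ‖U r x‖ := norm_inner_le_norm _ _
      _ ≤ ‖C‖ * ‖U (r - s) y‖ * ‖U r x‖ := by gcongr; exact C.le_opNorm _
      _ = ‖C‖ * (‖(x : 𝓗)‖ * ‖(y : 𝓗)‖) := by rw [hU.norm_map, hU.norm_map]; ring
  have hmvt : ‖F s - F 0‖ ≤ ‖C‖ * (‖(x : 𝓗)‖ * ‖(y : 𝓗)‖) * ‖s - 0‖ :=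
    Convex.norm_image_sub_le_of_norm_hasDerivWithin_le
      (fun r _ => (hU.hasDerivAt_inner_projection hT hP hC x y s r).hasDerivWithinAt)
      (fun r _ => hderiv_le r) convex_univ (Set.mem_univ 0) (Set.mem_univ s)
  have hdiff : F s - F 0 = -⟪(y : 𝓗), (U s ∘L P - P ∘L U s) x⟫_ℂ := by
    simp only [F, sub_self, zero_sub, hU.map_zero, one_apply_eq_self, hU.inner_map_neg_left,
      _root_.sub_apply, ContinuousLinearMap.comp_apply, inner_sub_right]
    ring
  rw [norm_inner_symm, ← norm_neg, ← hdiff]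
  simpa [mul_comm, mul_left_comm, mul_assoc] using hmvt

theorem norm_commutator_projection_le (hT : IsSelfAdjoint T)
    (hP : (P : 𝓗 →ₗ[ℂ] 𝓗).IsSymmetric) (hC : ∀ x : T.domain, C x = T ⟨P x, hPD x x.2⟩ - P (T x))
    (s : ℝ) : ‖U s ∘L P - P ∘L U s‖ ≤ |s| * ‖C‖ :=
  ContinuousLinearMap.opNorm_le_of_dense_inner_le hT.dense_domain hT.dense_domain (by positivity)
    fun x hx y hy => hU.norm_inner_commutator_projection_le hT hP hC s ⟨x, hx⟩ ⟨y, hy⟩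

end IsUnitaryGroupGeneratedBy

end Commutator

end

theorem commutator_unitary_group_projection_bound_general
    {𝓗 : Type*} [NormedAddCommGroup 𝓗] [InnerProductSpace ℂ 𝓗] [CompleteSpace 𝓗]
    (T : 𝓗 →ₗ.[ℂ] 𝓗) (hT : IsSelfAdjoint T)
    (P : 𝓗 →L[ℂ] 𝓗) (hPsa : IsSelfAdjoint P)
    (hPD : ∀ x ∈ T.domain, P x ∈ T.domain)
    (d : ℝ) (C : 𝓗 →L[ℂ] 𝓗) (hCn : ‖C‖ ≤ d)
    (hC : ∀ x : T.domain, C x = T ⟨P x, hPD x x.2⟩ - P (T x))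
    (U : ℝ → (𝓗 →L[ℂ] 𝓗))
    (hUiso : ∀ (s : ℝ) (x : 𝓗), ‖U s x‖ = ‖x‖)
    (hU0 : U 0 = 1)
    (hUgrp : ∀ s t : ℝ, U (s + t) = U s ∘L U t)
    (hUder : ∀ (x : T.domain) (s : ℝ),
      HasDerivAt (fun r : ℝ => U r (x : 𝓗)) ((-Complex.I) • U s (T x)) s) :
    ∀ s : ℝ, ‖U s ∘L P - P ∘L U s‖ ≤ |s| * d := by
  intro s
  have hU : IsUnitaryGroupGeneratedBy T U := ⟨hUiso, hU0, hUgrp, hUder⟩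
  calc ‖U s ∘L P - P ∘L U s‖ ≤ |s| * ‖C‖ :=
        hU.norm_commutator_projection_le hT hPsa.isSymmetric hC s
    _ ≤ |s| * d := by gcongr

/-- if `H` is a self-adjoint operator with domain `D`, `P` an orthogonal
projection with `P D ⊆ D` such that the commutator `[H, P]` extends to a bounded
operator `C` with `‖C‖ ≤ d`, and `U s = e^{-iHs}` is the unitary group generated by
`H`, then `‖[U s, P]‖ ≤ |s| · d` for every `s ∈ ℝ`. -/
theorem commutator_unitary_group_projection_bound
    {𝓗 : Type*} [NormedAddCommGroup 𝓗] [InnerProductSpace ℂ 𝓗] [CompleteSpace 𝓗]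
    (T : 𝓗 →ₗ.[ℂ] 𝓗) (hT : IsSelfAdjoint T)
    (P : 𝓗 →L[ℂ] 𝓗) (hP2 : P ∘L P = P) (hPsa : IsSelfAdjoint P)
    (hPD : ∀ x ∈ T.domain, P x ∈ T.domain)
    (d : ℝ) (C : 𝓗 →L[ℂ] 𝓗) (hCn : ‖C‖ ≤ d)
    (hC : ∀ x : T.domain, C x = T ⟨P x, hPD x x.2⟩ - P (T x))
    (U : ℝ → (𝓗 →L[ℂ] 𝓗))
    (hUiso : ∀ (s : ℝ) (x : 𝓗), ‖U s x‖ = ‖x‖)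
    (hU0 : U 0 = 1)
    (hUgrp : ∀ s t : ℝ, U (s + t) = U s ∘L U t)
    (hUder : ∀ (x : T.domain) (s : ℝ),
      HasDerivAt (fun r : ℝ => U r (x : 𝓗)) ((-Complex.I) • U s (T x)) s) :
    ∀ s : ℝ, ‖U s ∘L P - P ∘L U s‖ ≤ |s| * d :=
  commutator_unitary_group_projection_bound_general T hT P hPsa hPD d C hCn hC U hUiso hU0 hUgrp
    hUder
end

section
/- Let A be a self-adjoint operator on a Hilbert space with domain D and P an orthogonal projection with PD ⊆ D such that [A,P] is bounded with ‖[A,P]‖ ≤ d. Then PAP is self-adjoint on PD ⊕ P^⊥𝓗, and for every z ∈ ℂ with Im z ≠ 0, ‖P((A−z)^{-1} − (PAP−z)^{-1})P‖ ≤ d²/|Im z|³. -/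
open scoped InnerProductSpace

/-!
For a symmetric `T` and `Im z ≠ 0`, `|Im z| ‖w‖ ≤ ‖(T - z) w‖`, so a right inverse `R` of `T - z`
has norm at most `1 / |Im z|` and satisfies `R ((T - z) w) = w` on the domain of `T`. Applying
this to `P (R_A y)` and to `R_S (P x)`, which lies in `P D`, with `T P - P T = C` on `D`, gives
`P R_A = R_A P + R_A C R_A`, `R_S P = R_A P + R_A C R_S P` and `P C R_S P = 0`, hence
`P (R_A - R_S) P = -R_A C R_A C R_S P`, of norm at most `d² / |Im z|³`.

`S = P T P` is symmetric on a domain containing `D`. If `u` lies in the domain of `S†`, then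
`⟪P u, T v⟫ = ⟪S† u - C† P u, v⟫` for `v ∈ D`, so `P u ∈ D(T†) = D`, i.e. `u` lies in the domain
of `S`; hence `S† = S`.
-/

/-- The compression `P A P` of an unbounded operator `A` by a bounded operator `P`,
defined on the domain `{x : P x ∈ D(A)}` (for an orthogonal projection `P` with
`P D ⊆ D` this domain is `PD ⊕ P^⊥𝓗`). -/
noncomputable def LinearPMap.compress
    {𝓗 : Type*} [NormedAddCommGroup 𝓗] [InnerProductSpace ℂ 𝓗]
    (T : 𝓗 →ₗ.[ℂ] 𝓗) (P : 𝓗 →L[ℂ] 𝓗) : 𝓗 →ₗ.[ℂ] 𝓗 where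
  domain := T.domain.comap (P : 𝓗 →ₗ[ℂ] 𝓗)
  toFun :=
    (P : 𝓗 →ₗ[ℂ] 𝓗) ∘ₗ T.toFun ∘ₗ
      (LinearMap.codRestrict T.domain
        ((P : 𝓗 →ₗ[ℂ] 𝓗) ∘ₗ (T.domain.comap (P : 𝓗 →ₗ[ℂ] 𝓗)).subtype)
        (fun x => x.2))

theorem ContinuousLinearMap.IsIdempotentElem.apply_apply {R M : Type*} [Semiring R]
    [AddCommMonoid M] [TopologicalSpace M] [Module R M] {P : M →L[R] M} (hP : IsIdempotentElem P)
    (x : M) : P (P x) = P x :=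
  DFunLike.congr_fun hP.eq x

namespace LinearPMap

open ContinuousLinearMap

variable {𝓗 : Type*} [NormedAddCommGroup 𝓗] [InnerProductSpace ℂ 𝓗] {T : 𝓗 →ₗ.[ℂ] 𝓗}

theorem IsFormalAdjoint.abs_im_mul_norm_le (hT : T.IsFormalAdjoint T) (z : ℂ) (x : T.domain) :
    |z.im| * ‖(x : 𝓗)‖ ≤ ‖T x - z • (x : 𝓗)‖ := by
  have hreal : (⟪(x : 𝓗), T x⟫_ℂ).im = 0 :=
    Complex.conj_eq_iff_im.mp (by rw [inner_conj_symm]; exact hT x x)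
  have him : (⟪(x : 𝓗), T x - z • (x : 𝓗)⟫_ℂ).im = -(z.im * ‖(x : 𝓗)‖ ^ 2) := by
    rw [inner_sub_right, inner_smul_right, inner_self_eq_norm_sq_to_K]
    simp [Complex.mul_im, hreal, ← Complex.ofReal_pow]
  have key : |z.im| * ‖(x : 𝓗)‖ ^ 2 ≤ ‖(x : 𝓗)‖ * ‖T x - z • (x : 𝓗)‖ :=
    calc |z.im| * ‖(x : 𝓗)‖ ^ 2 = |(⟪(x : 𝓗), T x - z • (x : 𝓗)⟫_ℂ).im| := by
          rw [him, abs_neg, abs_mul, abs_of_nonneg (by positivity : (0 : ℝ) ≤ ‖(x : 𝓗)‖ ^ 2)]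
      _ ≤ ‖⟪(x : 𝓗), T x - z • (x : 𝓗)⟫_ℂ‖ := Complex.abs_im_le_norm _
      _ ≤ ‖(x : 𝓗)‖ * ‖T x - z • (x : 𝓗)‖ := norm_inner_le_norm _ _
  rcases (norm_nonneg (x : 𝓗)).eq_or_lt with h | h
  · simp [← h]
  · nlinarith

theorem IsFormalAdjoint.injective_sub_smul (hT : T.IsFormalAdjoint T) {z : ℂ} (hz : z.im ≠ 0) :
    Function.Injective fun x : T.domain => T x - z • (x : 𝓗) := by
  intro a b hab
  have h := hT.abs_im_mul_norm_le z (a - b)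
  simp only [map_sub, Submodule.coe_sub, smul_sub, sub_sub_sub_comm, hab, sub_self,
    norm_zero] at h
  have : ‖((a : 𝓗) - b)‖ = 0 := by
    nlinarith [abs_pos.mpr hz, norm_nonneg ((a : 𝓗) - b)]
  exact Subtype.ext (sub_eq_zero.mp (norm_eq_zero.mp this))

theorem IsFormalAdjoint.eq_resolvent_apply (hT : T.IsFormalAdjoint T) {z : ℂ} (hz : z.im ≠ 0)
    {R : 𝓗 →L[ℂ] 𝓗} (hR : ∀ x, R x ∈ T.domain) (hRz : ∀ x, T ⟨R x, hR x⟩ - z • R x = x)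
    (w : T.domain) : (w : 𝓗) = R (T w - z • (w : 𝓗)) :=
  congrArg Subtype.val (hT.injective_sub_smul hz (a₂ := ⟨_, hR _⟩) (hRz _).symm)

theorem IsFormalAdjoint.norm_resolvent_le (hT : T.IsFormalAdjoint T) {z : ℂ} (hz : z.im ≠ 0)
    {R : 𝓗 →L[ℂ] 𝓗} (hR : ∀ x, R x ∈ T.domain) (hRz : ∀ x, T ⟨R x, hR x⟩ - z • R x = x) :
    ‖R‖ ≤ |z.im|⁻¹ := by
  refine R.opNorm_le_bound (by positivity) fun x => ?_
  have h := hT.abs_im_mul_norm_le z ⟨R x, hR x⟩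
  rw [hRz] at h
  rw [inv_mul_eq_div, le_div_iff₀ (abs_pos.mpr hz), mul_comm]
  exact h

theorem IsFormalAdjoint.isSelfAdjoint_of_adjoint_domain_le [CompleteSpace 𝓗]
    (hT : T.IsFormalAdjoint T) (hd : Dense (T.domain : Set 𝓗)) (h : T†.domain ≤ T.domain) :
    IsSelfAdjoint T :=
  (eq_of_le_of_domain_eq (hT.le_adjoint hd) (le_antisymm (hT.le_adjoint hd).1 h)).symm

theorem _root_.IsSelfAdjoint.isFormalAdjoint [CompleteSpace 𝓗] (hT : IsSelfAdjoint T) :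
    T.IsFormalAdjoint T := by
  simpa only [isSelfAdjoint_def.mp hT] using adjoint_isFormalAdjoint hT.dense_domain

section Compress

variable {P : 𝓗 →L[ℂ] 𝓗}

theorem mem_compress_domain {x : 𝓗} : x ∈ (T.compress P).domain ↔ P x ∈ T.domain :=
  Iff.rfl

theorem compress_apply (x : (T.compress P).domain) :
    T.compress P x = P (T ⟨P x, mem_compress_domain.mp x.2⟩) :=
  rfl

theorem IsFormalAdjoint.compress [CompleteSpace 𝓗] (hT : T.IsFormalAdjoint T)
    (hP : IsSelfAdjoint P) :
    (T.compress P).IsFormalAdjoint (T.compress P) := by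
  have hPsym : ∀ x y : 𝓗, ⟪P x, y⟫_ℂ = ⟪x, P y⟫_ℂ := hP.isSymmetric
  intro a b
  rw [compress_apply, compress_apply, hPsym, ← hPsym (a : 𝓗)]
  exact hT ⟨P a, mem_compress_domain.mp a.2⟩ ⟨P b, mem_compress_domain.mp b.2⟩

variable {hPD : ∀ x ∈ T.domain, P x ∈ T.domain} {C : 𝓗 →L[ℂ] 𝓗}

theorem apply_proj_eq_commutator_add (hC : ∀ x : T.domain, C x = T ⟨P x, hPD x x.2⟩ - P (T x))
    (w : T.domain) : T ⟨P w, hPD w w.2⟩ = C w + P (T w) := by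
  rw [hC, sub_add_cancel]

theorem proj_commutator_apply_of_proj (hP : IsIdempotentElem P)
    (hC : ∀ x : T.domain, C x = T ⟨P x, hPD x x.2⟩ - P (T x)) (w : T.domain) (hw : P w = w) :
    P (C w) = 0 := by
  rw [hC, P.map_sub, show (⟨P w, _⟩ : T.domain) = w from Subtype.ext hw,
    IsIdempotentElem.apply_apply hP, sub_self]

theorem compress_adjoint_domain_le [CompleteSpace 𝓗] (hT : IsSelfAdjoint T)
    (hP : IsStarProjection P)
    (hC : ∀ x : T.domain, C x = T ⟨P x, hPD x x.2⟩ - P (T x)) :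
    (T.compress P)†.domain ≤ (T.compress P).domain := by
  have hPsym : ∀ x y : 𝓗, ⟪P x, y⟫_ℂ = ⟪x, P y⟫_ℂ := hP.isSelfAdjoint.isSymmetric
  intro u hu
  have key : ∀ v : T.domain,
      ⟪(T.compress P)† ⟨u, hu⟩ - C.adjoint (P u), v⟫_ℂ = ⟪P u, T v⟫_ℂ := by
    intro v
    have h := adjoint_isFormalAdjoint (hT.dense_domain.mono fun x hx => hPD x hx) ⟨u, hu⟩
      ⟨v, hPD v v.2⟩
    rw [compress_apply, apply_proj_eq_commutator_add hC] at h
    rw [inner_sub_left, h, C.adjoint_inner_left, P.map_add, inner_add_right,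
      ← hPsym u, ← hPsym u, ← hPsym (P u), IsIdempotentElem.apply_apply hP.isIdempotentElem,
      add_sub_cancel_left]
  show P u ∈ T.domain
  rw [← isSelfAdjoint_def.mp hT]
  exact mem_adjoint_domain_of_exists _ ⟨_, key⟩

theorem isSelfAdjoint_compress [CompleteSpace 𝓗] (hT : IsSelfAdjoint T)
    (hP : IsStarProjection P)
    (hC : ∀ x : T.domain, C x = T ⟨P x, hPD x x.2⟩ - P (T x)) :
    IsSelfAdjoint (T.compress P) :=
  (hT.isFormalAdjoint.compress hP.isSelfAdjoint).isSelfAdjoint_of_adjoint_domain_le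
    (hT.dense_domain.mono fun x hx => hPD x hx) (compress_adjoint_domain_le hT hP hC)

end Compress

section Resolvent

variable {P C RA RS : 𝓗 →L[ℂ] 𝓗} {hPD : ∀ x ∈ T.domain, P x ∈ T.domain} {z : ℂ}

theorem proj_resolvent_apply (hT : T.IsFormalAdjoint T) (hz : z.im ≠ 0)
    (hC : ∀ x : T.domain, C x = T ⟨P x, hPD x x.2⟩ - P (T x))
    (hRA : ∀ x, RA x ∈ T.domain) (hRAz : ∀ x, T ⟨RA x, hRA x⟩ - z • RA x = x) (y : 𝓗) :
    P (RA y) = RA (P y) + RA (C (RA y)) :=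
  calc P (RA y) = RA (T ⟨P (RA y), hPD _ (hRA y)⟩ - z • P (RA y)) :=
        hT.eq_resolvent_apply hz hRA hRAz ⟨P (RA y), hPD _ (hRA y)⟩
    _ = RA (C (RA y) + P (T ⟨RA y, hRA y⟩ - z • RA y)) := by
        rw [apply_proj_eq_commutator_add hC ⟨RA y, hRA y⟩, P.map_sub, P.map_smul, add_sub_assoc]
    _ = RA (P y) + RA (C (RA y)) := by rw [hRAz, RA.map_add, add_comm]

theorem proj_compress_resolvent_apply (hP : IsIdempotentElem P) (hz : z ≠ 0)
    (hRS : ∀ x, RS x ∈ (T.compress P).domain)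
    (hRSz : ∀ x, T.compress P ⟨RS x, hRS x⟩ - z • RS x = x) {y : 𝓗} (hy : P y = y) :
    P (RS y) = RS y := by
  have h := hRSz y
  have hPh := congrArg P h
  rw [compress_apply, P.map_sub, P.map_smul, IsIdempotentElem.apply_apply hP, hy] at hPh
  rw [compress_apply] at h
  exact smul_right_injective 𝓗 hz (sub_right_inj.mp (hPh.trans h.symm))

theorem compress_resolvent_apply (hT : T.IsFormalAdjoint T) (hz : z.im ≠ 0)
    (hC : ∀ x : T.domain, C x = T ⟨P x, hPD x x.2⟩ - P (T x))
    (hRA : ∀ x, RA x ∈ T.domain) (hRAz : ∀ x, T ⟨RA x, hRA x⟩ - z • RA x = x)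
    (hRS : ∀ x, RS x ∈ (T.compress P).domain)
    (hRSz : ∀ x, T.compress P ⟨RS x, hRS x⟩ - z • RS x = x) {y : 𝓗} (hPRS : P (RS y) = RS y) :
    RS y = RA y + RA (C (RS y)) := by
  have hw : RS y ∈ T.domain := hPRS ▸ mem_compress_domain.mp (hRS y)
  have hTw : T ⟨P (RS y), hPD _ hw⟩ = T ⟨RS y, hw⟩ := congrArg T (Subtype.ext hPRS)
  have hSw : P (T ⟨RS y, hw⟩) - z • RS y = y := by
    rw [← hTw]; exact hRSz y
  calc RS y = RA (T ⟨RS y, hw⟩ - z • RS y) := hT.eq_resolvent_apply hz hRA hRAz ⟨RS y, hw⟩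
    _ = RA (C (RS y) + (P (T ⟨RS y, hw⟩) - z • RS y)) := by
        rw [← add_sub_assoc, ← apply_proj_eq_commutator_add hC ⟨RS y, hw⟩, hTw]
    _ = RA y + RA (C (RS y)) := by rw [hSw, RA.map_add, add_comm]

theorem proj_resolvent_sub_compress_resolvent_proj (hT : T.IsFormalAdjoint T)
    (hP : IsIdempotentElem P) (hz : z.im ≠ 0)
    (hC : ∀ x : T.domain, C x = T ⟨P x, hPD x x.2⟩ - P (T x))
    (hRA : ∀ x, RA x ∈ T.domain) (hRAz : ∀ x, T ⟨RA x, hRA x⟩ - z • RA x = x)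
    (hRS : ∀ x, RS x ∈ (T.compress P).domain)
    (hRSz : ∀ x, T.compress P ⟨RS x, hRS x⟩ - z • RS x = x) :
    P ∘L (RA - RS) ∘L P = -(RA ∘L C ∘L RA ∘L C ∘L RS ∘L P) := by
  ext x
  have hy : P (P x) = P x := IsIdempotentElem.apply_apply hP x
  have hPRS := proj_compress_resolvent_apply hP (fun h => hz (by simp [h])) hRS hRSz hy
  have hPCRS : P (C (RS (P x))) = 0 :=
    proj_commutator_apply_of_proj hP hC ⟨RS (P x), hPRS ▸ hRS (P x)⟩ hPRS
  have hdiff : RA (P x) - RS (P x) = -RA (C (RS (P x))) := by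
    linear_combination (norm := module)
      -(compress_resolvent_apply hT hz hC hRA hRAz hRS hRSz hPRS)
  simp only [ContinuousLinearMap.comp_apply, _root_.sub_apply, _root_.neg_apply]
  rw [hdiff, P.map_neg, proj_resolvent_apply hT hz hC hRA hRAz, hPCRS, RA.map_zero, zero_add]

end Resolvent

end LinearPMap

/-- for a self-adjoint `A` with domain `D` and an orthogonal projection
`P` with `PD ⊆ D` and `‖[A,P]‖ ≤ d`, the compression `PAP` is self-adjoint on
`PD ⊕ P^⊥𝓗 = {x : Px ∈ D}`, and for every non-real `z` the resolvents satisfy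
`‖P((A−z)⁻¹ − (PAP−z)⁻¹)P‖ ≤ d²/|Im z|³`. -/
theorem compressed_resolvent_estimate
    {𝓗 : Type*} [NormedAddCommGroup 𝓗] [InnerProductSpace ℂ 𝓗] [CompleteSpace 𝓗]
    (T : 𝓗 →ₗ.[ℂ] 𝓗) (hT : IsSelfAdjoint T)
    (P : 𝓗 →L[ℂ] 𝓗) (hP2 : P ∘L P = P) (hPsa : IsSelfAdjoint P)
    (hPD : ∀ x ∈ T.domain, P x ∈ T.domain)
    (d : ℝ) (C : 𝓗 →L[ℂ] 𝓗) (hCn : ‖C‖ ≤ d)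
    (hC : ∀ x : T.domain, C x = T ⟨P x, hPD x x.2⟩ - P (T x)) :
    IsSelfAdjoint (T.compress P) ∧
      ∀ z : ℂ, z.im ≠ 0 →
        ∀ (RA RS : 𝓗 →L[ℂ] 𝓗)
          (hRA : ∀ x : 𝓗, RA x ∈ T.domain)
          (hRS : ∀ x : 𝓗, RS x ∈ (T.compress P).domain),
          (∀ x : 𝓗, T ⟨RA x, hRA x⟩ - z • RA x = x) →
          (∀ x : 𝓗, (T.compress P) ⟨RS x, hRS x⟩ - z • RS x = x) →
          ‖P ∘L (RA - RS) ∘L P‖ ≤ d ^ 2 / |z.im| ^ 3 := by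
  have hP : IsStarProjection P := ⟨hP2, hPsa⟩
  refine ⟨LinearPMap.isSelfAdjoint_compress hT hP hC, fun z hz RA RS hRA hRS hRAz hRSz => ?_⟩
  have hRAn := hT.isFormalAdjoint.norm_resolvent_le hz hRA hRAz
  have hRSn := (hT.isFormalAdjoint.compress hPsa).norm_resolvent_le hz hRS hRSz
  have hd : 0 ≤ d := (norm_nonneg C).trans hCn
  rw [LinearPMap.proj_resolvent_sub_compress_resolvent_proj hT.isFormalAdjoint hP2 hz hC hRA hRAz
    hRS hRSz, norm_neg]
  calc ‖RA ∘L C ∘L RA ∘L C ∘L RS ∘L P‖ ≤ ‖RA‖ * (‖C‖ * (‖RA‖ * (‖C‖ * (‖RS‖ * ‖P‖)))) := by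
        repeat grw [ContinuousLinearMap.opNorm_comp_le]
    _ ≤ |z.im|⁻¹ * (d * (|z.im|⁻¹ * (d * (|z.im|⁻¹ * 1)))) := by
        gcongr
        exact hP.norm_le
    _ = d ^ 2 / |z.im| ^ 3 := by field_simp
end

section
/- Let π₀ : ℝ^{2n} → B(𝓗_f) be a smooth family of rank-one orthogonal projections and H₀, e₀ as above (H₀π₀ = π₀H₀ = e₀π₀), with relevant derivatives trace class. Define M := (i/2) tr({π₀ | H₀ | π₀}) with {A|B|C} := ∂_pA·B∂_qC − ∂_qA·B∂_pC. Then M · π₀ = (i/2) {π₀ | H₀ − e₀ | π₀}, and consequently M = −(i/2) tr(π₀ {π₀, H₀ − e₀}). -/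
/-- Classical phase space `ℝ^{2n} = ℝ^n_q × ℝ^n_p`. -/
abbrev PhaseSpace (n : ℕ) := EuclideanSpace ℝ (Fin n) × EuclideanSpace ℝ (Fin n)

/-- Partial derivative in the direction of `q_j`. -/
noncomputable def dq {n : ℕ} {W : Type*} [NormedAddCommGroup W] [NormedSpace ℝ W]
    (A : PhaseSpace n → W) (j : Fin n) (z : PhaseSpace n) : W :=
  fderiv ℝ A z (EuclideanSpace.single j 1, 0)

/-- Partial derivative in the direction of `p_j`. -/
noncomputable def dp {n : ℕ} {W : Type*} [NormedAddCommGroup W] [NormedSpace ℝ W]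
    (A : PhaseSpace n → W) (j : Fin n) (z : PhaseSpace n) : W :=
  fderiv ℝ A z (0, EuclideanSpace.single j 1)

/-- Operator-valued Poisson bracket `{A,B} = ∂_p A · ∂_q B − ∂_q A · ∂_p B`. -/
noncomputable def poisson {n : ℕ} {F : Type*} [NormedAddCommGroup F] [InnerProductSpace ℂ F]
    (A B : PhaseSpace n → (F →L[ℂ] F)) (z : PhaseSpace n) : F →L[ℂ] F :=
  ∑ j : Fin n, (dp A j z * dq B j z - dq A j z * dp B j z)

/-- The triple bracket `{A|B|C} = ∂_p A · B · ∂_q C − ∂_q A · B · ∂_p C`. -/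
noncomputable def tripleBracket {n : ℕ} {F : Type*} [NormedAddCommGroup F]
    [InnerProductSpace ℂ F]
    (A B C : PhaseSpace n → (F →L[ℂ] F)) (z : PhaseSpace n) : F →L[ℂ] F :=
  ∑ j : Fin n, (dp A j z * B z * dq C j z - dq A j z * B z * dp C j z)

/-- The operator trace of a bounded operator on the (finite-dimensional) fibre space. -/
noncomputable def opTrace {F : Type*} [NormedAddCommGroup F] [InnerProductSpace ℂ F]
    (A : F →L[ℂ] F) : ℂ :=
  LinearMap.trace ℂ F (A : F →ₗ[ℂ] F)

section Aux

variable {F : Type*} [NormedAddCommGroup F] [InnerProductSpace ℂ F]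

lemma opTrace_eq' (X : F →L[ℂ] F) :
    opTrace X = ((LinearMap.trace ℂ F).comp (ContinuousLinearMap.coeLM ℂ)) X := rfl

lemma opTrace_sub (X Y : F →L[ℂ] F) : opTrace (X - Y) = opTrace X - opTrace Y := by
  simp only [opTrace_eq', map_sub]

lemma opTrace_add {F : Type*} [NormedAddCommGroup F] [InnerProductSpace ℂ F]
    (X Y : F →L[ℂ] F) : opTrace (X + Y) = opTrace X + opTrace Y := by
  simp only [opTrace_eq', map_add]

lemma opTrace_neg (X : F →L[ℂ] F) : opTrace (-X) = -opTrace X := by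
  simp only [opTrace_eq', map_neg]

lemma opTrace_sum {ι : Type*} (s : Finset ι) (f : ι → (F →L[ℂ] F)) :
    opTrace (∑ j ∈ s, f j) = ∑ j ∈ s, opTrace (f j) := by
  simp only [opTrace_eq', map_sum]

lemma opTrace_real_smul (r : ℝ) (X : F →L[ℂ] F) : opTrace (r • X) = r • opTrace X := by
  simp only [opTrace_eq']
  exact LinearMap.map_smul_of_tower _ r X

lemma opTrace_mul_comm (X Y : F →L[ℂ] F) : opTrace (X * Y) = opTrace (Y * X) := by
  have h : ∀ (U V : F →L[ℂ] F), ((U * V : F →L[ℂ] F) : F →ₗ[ℂ] F)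
      = (U : F →ₗ[ℂ] F) * (V : F →ₗ[ℂ] F) := fun U V => rfl
  simp only [opTrace, h]
  exact LinearMap.trace_mul_comm ℂ _ _

lemma rank_one_compress [FiniteDimensional ℂ F] {P : F →L[ℂ] F} (hidem : P * P = P)
    (hr : Module.finrank ℂ (LinearMap.range ((P : F →L[ℂ] F) : F →ₗ[ℂ] F)) = 1)
    (T : F →L[ℂ] F) : P * T * P = opTrace (T * P) • P := by
  set p : F →ₗ[ℂ] F := (P : F →ₗ[ℂ] F) with hpdef
  set t : F →ₗ[ℂ] F := (T : F →ₗ[ℂ] F) with htdef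
  have hp : p * p = p := by
    have : ((P * P : F →L[ℂ] F) : F →ₗ[ℂ] F) = p := by rw [hidem]
    exact this
  have hproj : LinearMap.IsProj (LinearMap.range p) p := by
    refine ⟨fun x => LinearMap.mem_range_self p x, ?_⟩
    rintro x ⟨y, rfl⟩
    exact congrFun (congrArg DFunLike.coe hp) y
  have htrP : LinearMap.trace ℂ F p = 1 := by
    have := hproj.trace
    rw [hr] at this
    simpa using this
  set b := Module.finBasisOfFinrankEq ℂ (LinearMap.range p) hr with hbdef
  set u : F := (b 0 : F) with hudef
  set φ : F →ₗ[ℂ] ℂ := (b.coord 0) ∘ₗ (p.codRestrict (LinearMap.range p) hproj.map_mem)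
    with hφdef
  have hφ : ∀ x, p x = φ x • u := by
    intro x
    set v : LinearMap.range p := p.codRestrict (LinearMap.range p) hproj.map_mem x with hv
    have h1 : (b.repr v 0) • b 0 = v := by
      have := b.sum_repr v
      rwa [Fin.sum_univ_one] at this
    have h2 : (v : F) = p x := rfl
    have h3 : φ x = b.repr v 0 := rfl
    rw [← h2, ← h1, h3]
    simp [hudef]
  have key1 : ∀ x, p (t (p x)) = φ (t u) • p x := by
    intro x
    rw [hφ x, map_smul, map_smul, hφ (t u), smul_smul, mul_comm, ← smul_smul, ← hφ x]
  have hc : P * T * P = φ (t u) • P := by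
    ext x
    exact key1 x
  have htr : opTrace (T * P) = φ (t u) := by
    have e1 : ((T * P : F →L[ℂ] F) : F →ₗ[ℂ] F) = t * p := rfl
    have ptp : p * (t * p) = φ (t u) • p := by
      ext x
      simpa [Module.End.mul_apply] using key1 x
    calc opTrace (T * P) = LinearMap.trace ℂ F (t * p) := by rw [opTrace, e1]
      _ = LinearMap.trace ℂ F (t * (p * p)) := by rw [hp]
      _ = LinearMap.trace ℂ F ((t * p) * p) := by rw [mul_assoc]
      _ = LinearMap.trace ℂ F (p * (t * p)) := LinearMap.trace_mul_comm ℂ _ _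
      _ = LinearMap.trace ℂ F (φ (t u) • p) := by rw [ptp]
      _ = φ (t u) * LinearMap.trace ℂ F p := by rw [map_smul, smul_eq_mul]
      _ = φ (t u) := by rw [htrP, mul_one]
  rw [htr, hc]

end Aux

lemma fderiv_mul_apply' {E : Type*} [NormedAddCommGroup E] [NormedSpace ℝ E]
    {A : Type*} [NormedRing A] [NormedAlgebra ℝ A] {f g : E → A} {z : E}
    (hf : DifferentiableAt ℝ f z) (hg : DifferentiableAt ℝ g z) (v : E) :
    fderiv ℝ (fun w => f w * g w) z v = fderiv ℝ f z v * g z + f z * fderiv ℝ g z v := by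
  rw [show (fun w => f w * g w) = f * g from rfl, (hf.hasFDerivAt.mul' hg.hasFDerivAt).fderiv]
  simp [ContinuousLinearMap.add_apply, ContinuousLinearMap.smul_apply,
    ContinuousLinearMap.smulRight_apply, smul_eq_mul, add_comm]

section Ring

variable {A : Type*} [Ring A]

lemma left_absorb {P D X : A} (hD : D = D * P + P * D) (hPX : P * X = 0) :
    D * X = P * (D * X) := by
  conv_lhs => rw [hD]
  rw [add_mul, mul_assoc D P X, hPX, mul_zero, zero_add, mul_assoc]

lemma right_absorb {P E X : A} (hE : E = E * P + P * E) (hXP : X * P = 0) :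
    X * E = (X * E) * P := by
  conv_lhs => rw [hE]
  rw [mul_add, ← mul_assoc X P E, hXP, zero_mul, add_zero, ← mul_assoc]

lemma sandwich {P B D E : A} (hBP : B * P = 0) (hPB : P * B = 0)
    (hD : D = D * P + P * D) (hE : E = E * P + P * E) :
    D * B * E = P * (D * B * E) * P := by
  have hPBE : P * (B * E) = 0 := by rw [← mul_assoc, hPB, zero_mul]
  have a1 : D * (B * E) = P * (D * (B * E)) := left_absorb hD hPBE
  have hDBP : (D * B) * P = 0 := by rw [mul_assoc, hBP, mul_zero]
  have a2 : (D * B) * E = ((D * B) * E) * P := right_absorb hE hDBP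
  calc D * B * E = D * B * E * P := a2
    _ = P * (D * B * E) * P := by
        conv_lhs => rw [mul_assoc D B E, a1, ← mul_assoc D B E]

end Ring

/-- For a smooth family of rank-one orthogonal projections `π₀` with
`H₀ π₀ = π₀ H₀ = e₀ π₀`, the magnetic-moment function
`M := (i/2) tr {π₀ | H₀ | π₀}` satisfies
`M · π₀ = (i/2) {π₀ | H₀ − e₀ | π₀}` and `M = −(i/2) tr(π₀ {π₀, H₀ − e₀})`. -/
theorem magnetic_moment_identities
    {n : ℕ} {F : Type*} [NormedAddCommGroup F] [InnerProductSpace ℂ F]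
    [FiniteDimensional ℂ F]
    (H₀ π₀ : PhaseSpace n → (F →L[ℂ] F)) (e₀ : PhaseSpace n → ℝ)
    (hH : ContDiff ℝ (⊤ : ℕ∞) H₀) (hπ : ContDiff ℝ (⊤ : ℕ∞) π₀) (he : ContDiff ℝ (⊤ : ℕ∞) e₀)
    (hidem : ∀ z, π₀ z * π₀ z = π₀ z)
    (hsa : ∀ z, IsSelfAdjoint (π₀ z))
    (hrank : ∀ z, Module.finrank ℂ (LinearMap.range ((π₀ z : F →L[ℂ] F) : F →ₗ[ℂ] F)) = 1)
    (heig₁ : ∀ z, H₀ z * π₀ z = e₀ z • π₀ z)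
    (heig₂ : ∀ z, π₀ z * H₀ z = e₀ z • π₀ z) :
    ∀ z : PhaseSpace n,
      (Complex.I / 2 * opTrace (tripleBracket π₀ H₀ π₀ z)) • π₀ z =
          (Complex.I / 2) • tripleBracket π₀ (fun w => H₀ w - e₀ w • 1) π₀ z ∧
        Complex.I / 2 * opTrace (tripleBracket π₀ H₀ π₀ z) =
          -(Complex.I / 2) * opTrace (π₀ z * poisson π₀ (fun w => H₀ w - e₀ w • 1) z) := by
  intro z
  set Bf : PhaseSpace n → (F →L[ℂ] F) := fun w => H₀ w - e₀ w • 1 with hBfdef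
  have hπd : DifferentiableAt ℝ π₀ z := (hπ.differentiable (by simp)).differentiableAt
  have hHd : DifferentiableAt ℝ H₀ z := (hH.differentiable (by simp)).differentiableAt
  have hed : DifferentiableAt ℝ e₀ z := (he.differentiable (by simp)).differentiableAt
  have hBd : DifferentiableAt ℝ Bf z := hHd.sub (hed.smul_const 1)
  -- centrality of scalar operators
  have hcentL : ∀ (w : PhaseSpace n) (X : F →L[ℂ] F), (e₀ w • 1) * X = e₀ w • X := by
    intro w X; ext v; simp
  have hcentR : ∀ (w : PhaseSpace n) (X : F →L[ℂ] F), X * (e₀ w • 1) = e₀ w • X := by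
    intro w X; ext v
    simp [ContinuousLinearMap.mul_apply]
  -- B kills the projection
  have hBπ : ∀ w, Bf w * π₀ w = 0 := by
    intro w
    simp only [hBfdef]
    rw [sub_mul, heig₁ w, hcentL w (π₀ w), sub_self]
  have hπB : ∀ w, π₀ w * Bf w = 0 := by
    intro w
    simp only [hBfdef]
    rw [mul_sub, heig₂ w, hcentR w (π₀ w), sub_self]
  -- derivative identities
  have hder : ∀ v : PhaseSpace n,
      fderiv ℝ π₀ z v = fderiv ℝ π₀ z v * π₀ z + π₀ z * fderiv ℝ π₀ z v := by
    intro v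
    have h0 := fderiv_mul_apply' hπd hπd v
    rw [show (fun w => π₀ w * π₀ w) = π₀ from funext hidem] at h0
    exact h0
  have hderB1 : ∀ v : PhaseSpace n,
      fderiv ℝ Bf z v * π₀ z = -(Bf z * fderiv ℝ π₀ z v) := by
    intro v
    have h0 := fderiv_mul_apply' hBd hπd v
    rw [show (fun w => Bf w * π₀ w) = fun _ => (0 : F →L[ℂ] F) from funext hBπ] at h0
    rw [fderiv_const_apply] at h0
    simp only [Pi.zero_apply, ContinuousLinearMap.zero_apply] at h0
    exact eq_neg_of_add_eq_zero_left h0.symm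
  -- abbreviations
  set P : F →L[ℂ] F := π₀ z with hPdef
  have hDq : ∀ j, dq π₀ j z = dq π₀ j z * P + P * dq π₀ j z := fun j => hder _
  have hDp : ∀ j, dp π₀ j z = dp π₀ j z * P + P * dp π₀ j z := fun j => hder _
  have hqB1 : ∀ j, dq Bf j z * P = -(Bf z * dq π₀ j z) := fun j => hderB1 _
  have hpB1 : ∀ j, dp Bf j z * P = -(Bf z * dp π₀ j z) := fun j => hderB1 _
  -- the sandwiched terms
  set Tp : Fin n → (F →L[ℂ] F) := fun j => dp π₀ j z * Bf z * dq π₀ j z with hTp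
  set Tq : Fin n → (F →L[ℂ] F) := fun j => dq π₀ j z * Bf z * dp π₀ j z with hTq
  have hsandp : ∀ j, Tp j = P * Tp j * P := fun j =>
    sandwich (hBπ z) (hπB z) (hDp j) (hDq j)
  have hsandq : ∀ j, Tq j = P * Tq j * P := fun j =>
    sandwich (hBπ z) (hπB z) (hDq j) (hDp j)
  have compress : ∀ (T : F →L[ℂ] F), T = P * T * P → T = opTrace T • P := by
    intro T hT
    have h1 : T = opTrace (T * P) • P := hT.trans (rank_one_compress (hidem z) (hrank z) T)
    have h2 : opTrace (T * P) = opTrace T := by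
      conv_rhs => rw [hT, opTrace_mul_comm (P * T) P, ← mul_assoc, hidem z]
      exact opTrace_mul_comm T P
    rwa [h2] at h1
  have hTpc : ∀ j, Tp j = opTrace (Tp j) • P := fun j => compress _ (hsandp j)
  have hTqc : ∀ j, Tq j = opTrace (Tq j) • P := fun j => compress _ (hsandq j)
  -- trace coefficient
  set c : ℂ := ∑ j : Fin n, (opTrace (Tp j) - opTrace (Tq j)) with hc
  -- triple bracket with B is c • P
  have htBB : tripleBracket π₀ Bf π₀ z = c • P := by
    rw [tripleBracket]
    calc ∑ j : Fin n, (dp π₀ j z * Bf z * dq π₀ j z - dq π₀ j z * Bf z * dp π₀ j z)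
        = ∑ j : Fin n, (opTrace (Tp j) - opTrace (Tq j)) • P := by
          refine Finset.sum_congr rfl fun j _ => ?_
          rw [sub_smul, ← hTpc j, ← hTqc j]
      _ = c • P := by rw [← Finset.sum_smul]
  -- trace of the H₀ triple bracket equals c
  have htrH : opTrace (tripleBracket π₀ H₀ π₀ z) = c := by
    rw [tripleBracket, opTrace_sum, hc]
    refine Finset.sum_congr rfl fun j _ => ?_
    have hH0 : H₀ z = Bf z + e₀ z • 1 := by simp [hBfdef]
    have hsplit : ∀ (D E : F →L[ℂ] F),
        D * H₀ z * E = D * Bf z * E + e₀ z • (D * E) := by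
      intro D E
      rw [hH0, mul_add, add_mul, hcentR z D, smul_mul_assoc]
    have hcancel : opTrace (e₀ z • (dp π₀ j z * dq π₀ j z))
        = opTrace (e₀ z • (dq π₀ j z * dp π₀ j z)) := by
      rw [opTrace_real_smul, opTrace_real_smul, opTrace_mul_comm]
    rw [opTrace_sub, hsplit, hsplit, opTrace_add, opTrace_add, hcancel]
    simp only [hTp, hTq]
    ring
  -- second identity trace
  have htrPois : opTrace (P * poisson π₀ Bf z) = -c := by
    rw [poisson, Finset.mul_sum, opTrace_sum, hc, ← Finset.sum_neg_distrib]
    refine Finset.sum_congr rfl fun j _ => ?_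
    have e1 : opTrace (P * (dp π₀ j z * dq Bf j z)) = -opTrace (Tp j) := by
      calc opTrace (P * (dp π₀ j z * dq Bf j z))
          = opTrace ((P * dp π₀ j z) * dq Bf j z) := by rw [mul_assoc]
        _ = opTrace (dq Bf j z * (P * dp π₀ j z)) := opTrace_mul_comm _ _
        _ = opTrace ((dq Bf j z * P) * dp π₀ j z) := by rw [mul_assoc]
        _ = opTrace (-(Bf z * dq π₀ j z) * dp π₀ j z) := by rw [hqB1 j]
        _ = -opTrace ((Bf z * dq π₀ j z) * dp π₀ j z) := by rw [neg_mul, opTrace_neg]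
        _ = -opTrace (Bf z * (dq π₀ j z * dp π₀ j z)) := by rw [mul_assoc]
        _ = -opTrace ((dq π₀ j z * dp π₀ j z) * Bf z) := by rw [opTrace_mul_comm]
        _ = -opTrace (dq π₀ j z * (dp π₀ j z * Bf z)) := by rw [mul_assoc]
        _ = -opTrace ((dp π₀ j z * Bf z) * dq π₀ j z) := by rw [opTrace_mul_comm]
        _ = -opTrace (Tp j) := rfl
    have e2 : opTrace (P * (dq π₀ j z * dp Bf j z)) = -opTrace (Tq j) := by
      calc opTrace (P * (dq π₀ j z * dp Bf j z))
          = opTrace ((P * dq π₀ j z) * dp Bf j z) := by rw [mul_assoc]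
        _ = opTrace (dp Bf j z * (P * dq π₀ j z)) := opTrace_mul_comm _ _
        _ = opTrace ((dp Bf j z * P) * dq π₀ j z) := by rw [mul_assoc]
        _ = opTrace (-(Bf z * dp π₀ j z) * dq π₀ j z) := by rw [hpB1 j]
        _ = -opTrace ((Bf z * dp π₀ j z) * dq π₀ j z) := by rw [neg_mul, opTrace_neg]
        _ = -opTrace (Bf z * (dp π₀ j z * dq π₀ j z)) := by rw [mul_assoc]
        _ = -opTrace ((dp π₀ j z * dq π₀ j z) * Bf z) := by rw [opTrace_mul_comm]
        _ = -opTrace (dp π₀ j z * (dq π₀ j z * Bf z)) := by rw [mul_assoc]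
        _ = -opTrace ((dq π₀ j z * Bf z) * dp π₀ j z) := by rw [opTrace_mul_comm]
        _ = -opTrace (Tq j) := rfl
    rw [mul_sub, opTrace_sub, e1, e2]
    ring
  constructor
  · rw [htrH, htBB, smul_smul]
  · rw [htrH, htrPois]
    ring
end
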